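/- Let f : I → ℝ be almost everywhere continuous on an interval I, bounded on I, and let φ : [α,β] → I be continuous and differentiable on (α,β). Let J be the closed interval with endpoints φ(α) and φ(β). If f is Riemann integrable on J and (f∘φ)·φ' is Riemann integrable on [α,β], then ∫_{φ(α)}^{φ(β)} f(x) dx = ∫_α^β f(φ(t))·φ'(t) dt. -/

import Mathlib

/-!
Let `F` be a primitive of `f` (extended by zero off `I`) and `ψ` a primitive of `(f ∘ φ) * φ'`.
Both are Lipschitz and, by the Lebesgue differentiation theorem, differentiate back to their
integrands almost everywhere. The difference `H = F ∘ φ - ψ` is pointwise Lipschitz on `(α, β)`,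
and `H' = 0` there off a null set: where `φ' = 0` the Lipschitz bound on `F` suffices, and
the points where `φ' ≠ 0` but `F` is not differentiable at `φ t` form a null set, because `φ`
is locally expanding there. A pointwise Lipschitz map sends null sets to null sets, so `H` maps
`[α, β]` onto a null interval, i.e. `H α = H β`.
-/

open MeasureTheory Set Filter Topology intervalIntegral

/-- A function is Riemann integrable on a set (Lebesgue criterion): it is bounded
on the set and continuous (within the set) at almost every point of the set. -/
def RiemannIntegrableOn (f : ℝ → ℝ) (s : Set ℝ) : Prop :=
  (∃ M, ∀ x ∈ s, |f x| ≤ M) ∧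
  ∀ᵐ x ∂(volume.restrict s), ContinuousWithinAt f s x

open Asymptotics
open scoped NNReal

theorem aestronglyMeasurable_of_ae_continuousWithinAt {α β : Type*} [TopologicalSpace α]
    [MeasurableSpace α] [OpensMeasurableSpace α] [TopologicalSpace β]
    [TopologicalSpace.PseudoMetrizableSpace β]
    [SecondCountableTopologyEither α β] {μ : Measure α} {g : α → β} {s : Set α}
    (hs : MeasurableSet s) (hg : ∀ᵐ x ∂μ.restrict s, ContinuousWithinAt g s x) :
    AEStronglyMeasurable g (μ.restrict s) := by
  obtain ⟨N, hgN, hN, hN0⟩ := exists_measurable_superset_of_null (ae_iff.1 hg)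
  have hcont : ContinuousOn g (Nᶜ ∩ s) := fun x hx =>
    (not_not.1 fun h => hx.1 (hgN h)).mono inter_subset_right
  have hfull : (μ.restrict s).restrict Nᶜ = μ.restrict s :=
    Measure.restrict_eq_self_of_ae_mem (compl_mem_ae_iff.2 hN0)
  rw [← hfull, Measure.restrict_restrict hN.compl]
  exact hcont.aestronglyMeasurable (hN.compl.inter hs)

theorem lipschitzWith_integral_of_norm_le {E : Type*} [NormedAddCommGroup E] [NormedSpace ℝ E]
    {g : ℝ → E} {M : ℝ≥0} (hg : LocallyIntegrable g volume) (hM : ∀ x, ‖g x‖ ≤ M) (c : ℝ) :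
    LipschitzWith M (fun x => ∫ y in c..x, g y) := by
  refine LipschitzWith.of_dist_le_mul fun x y => ?_
  have hint (u v : ℝ) : IntervalIntegrable g volume u v :=
    (hg.integrableOn_isCompact isCompact_uIcc).intervalIntegrable
  rw [dist_eq_norm, integral_interval_sub_left (hint c x) (hint c y), Real.dist_eq]
  exact norm_integral_le_of_norm_le_const fun z _ => hM z

namespace RiemannIntegrableOn

variable {f : ℝ → ℝ} {s : Set ℝ}

theorem exists_norm_indicator_le (hf : RiemannIntegrableOn f s) :
    ∃ M : ℝ≥0, ∀ x, ‖s.indicator f x‖ ≤ M := by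
  obtain ⟨M, hM⟩ := hf.1
  refine ⟨M.toNNReal, fun x => ?_⟩
  by_cases hx : x ∈ s
  · simpa [hx] using (hM x hx).trans (Real.le_coe_toNNReal M)
  · simp [hx]

theorem locallyIntegrable_indicator (hf : RiemannIntegrableOn f s) (hs : MeasurableSet s) :
    LocallyIntegrable (s.indicator f) volume := by
  obtain ⟨M, hM⟩ := hf.exists_norm_indicator_le
  have hmeas : AEStronglyMeasurable (s.indicator f) volume :=
    (aestronglyMeasurable_indicator_iff hs).2
      (aestronglyMeasurable_of_ae_continuousWithinAt hs hf.2)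
  exact (memLp_top_of_bound hmeas M (ae_of_all _ hM)).locallyIntegrable le_top

theorem exists_lipschitzWith_integral_indicator (hf : RiemannIntegrableOn f s)
    (hs : MeasurableSet s) (c : ℝ) :
    ∃ K, LipschitzWith K (fun x => ∫ y in c..x, s.indicator f y) := by
  obtain ⟨M, hM⟩ := hf.exists_norm_indicator_le
  exact ⟨M, lipschitzWith_integral_of_norm_le (hf.locallyIntegrable_indicator hs) hM c⟩

theorem ae_hasDerivAt_integral_indicator (hf : RiemannIntegrableOn f s) (hs : MeasurableSet s)
    (c : ℝ) : ∀ᵐ x, HasDerivAt (fun x => ∫ y in c..x, s.indicator f y) (s.indicator f x) x :=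
  (LocallyIntegrable.ae_hasDerivAt_integral (hf.locallyIntegrable_indicator hs)).mono
    fun _ hx => hx c

end RiemannIntegrableOn

theorem LipschitzWith.isBigO_comp_sub {α E F : Type*} [SeminormedAddCommGroup E]
    [SeminormedAddCommGroup F] {K : ℝ≥0} {g : E → F} (hg : LipschitzWith K g)
    (u : α → E) (l : Filter α) (y : E) :
    (fun s => g (u s) - g y) =O[l] (fun s => u s - y) :=
  IsBigO.of_bound K (Eventually.of_forall fun s => hg.norm_sub_le (u s) y)

theorem LipschitzWith.hasDerivAt_comp_of_hasDerivAt_zero {E : Type*} [NormedAddCommGroup E]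
    [NormedSpace ℝ E] {K : ℝ≥0} {F : ℝ → E} {φ : ℝ → ℝ} {t : ℝ} (hF : LipschitzWith K F)
    (hφ : HasDerivAt φ 0 t) : HasDerivAt (F ∘ φ) 0 t := by
  rw [hasDerivAt_iff_isLittleO] at hφ ⊢
  simp only [smul_zero, sub_zero, Function.comp_apply] at hφ ⊢
  exact (hF.isBigO_comp_sub φ (𝓝 t) (φ t)).trans_isLittleO hφ

/-- Sort the points of `A` by the constant and the radius of their bound, and cut `A` into
intervals shorter than that radius. -/
theorem exists_iUnion_eq_of_isBigO {f g : ℝ → ℝ} {A : Set ℝ}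
    (h : ∀ t ∈ A, (fun s => f s - f t) =O[𝓝[A] t] (fun s => g s - g t)) :
    ∃ P : ℕ × ℕ × ℤ → Set ℝ, ⋃ i, P i = A ∧
      ∀ i, ∃ C : ℝ≥0, ∀ x ∈ P i, ∀ y ∈ P i, |f x - f y| ≤ C * |g x - g y| := by
  let P : ℕ × ℕ × ℤ → Set ℝ := fun i => {t ∈ A | ⌊t * (i.1 + 1)⌋ = i.2.2 ∧
    ∀ s ∈ A, |s - t| < 1 / (i.1 + 1) → |f s - f t| ≤ i.2.1 * |g s - g t|}
  refine ⟨P, Subset.antisymm (iUnion_subset fun i t ht => ht.1) fun t ht => ?_, fun i => ?_⟩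
  · obtain ⟨C, hC⟩ := (h t ht).bound
    obtain ⟨δ, hδ, hball⟩ := Metric.mem_nhdsWithin_iff.1 hC
    obtain ⟨n, hn⟩ := exists_nat_one_div_lt hδ
    refine mem_iUnion.2 ⟨(n, ⌈C⌉₊, ⌊t * (n + 1)⌋), ht, rfl, fun s hs hst => ?_⟩
    have hs' : ‖f s - f t‖ ≤ C * ‖g s - g t‖ :=
      hball ⟨by rw [Metric.mem_ball, Real.dist_eq]; linarith, hs⟩
    exact hs'.trans (mul_le_mul_of_nonneg_right (Nat.le_ceil C) (norm_nonneg _))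
  · refine ⟨i.2.1, fun x hx y hy => hy.2.2 x hx.1 ?_⟩
    have hn : (0 : ℝ) < i.1 + 1 := by positivity
    have hxy := Int.abs_sub_lt_one_of_floor_eq_floor (hx.2.1.trans hy.2.1.symm)
    rw [← sub_mul, abs_mul, abs_of_pos hn] at hxy
    rwa [lt_div_iff₀ hn]

theorem LipschitzOnWith.volume_image_eq_zero {K : ℝ≥0} {f : ℝ → ℝ} {A : Set ℝ}
    (hf : LipschitzOnWith K f A) (hA : volume A = 0) : volume (f '' A) = 0 := by
  have := hf.hausdorffMeasure_image_le zero_le_one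
  rw [hausdorffMeasure_real, hA, mul_zero] at this
  exact nonpos_iff_eq_zero.1 this

theorem volume_image_eq_zero_of_isBigO {f : ℝ → ℝ} {A : Set ℝ} (hA : volume A = 0)
    (h : ∀ t ∈ A, (fun s => f s - f t) =O[𝓝[A] t] (fun s => s - t)) :
    volume (f '' A) = 0 := by
  obtain ⟨P, hPA, hP⟩ := exists_iUnion_eq_of_isBigO (g := id) h
  rw [← hPA, image_iUnion]
  refine measure_iUnion_null fun i => ?_
  obtain ⟨C, hC⟩ := hP i
  exact (LipschitzOnWith.of_dist_le_mul hC).volume_image_eq_zero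
    (measure_mono_null (hPA ▸ subset_iUnion P i) hA)

theorem volume_eq_zero_of_isBigO_of_volume_image {φ : ℝ → ℝ} {A : Set ℝ}
    (hA : volume (φ '' A) = 0)
    (h : ∀ t ∈ A, (fun s => s - t) =O[𝓝[A] t] (fun s => φ s - φ t)) : volume A = 0 := by
  obtain ⟨P, hPA, hP⟩ := exists_iUnion_eq_of_isBigO (f := id) h
  rw [← hPA]
  refine measure_iUnion_null fun i => ?_
  obtain ⟨C, hC⟩ := hP i
  have hinj : InjOn φ (P i) := fun x hx y hy hxy => by
    simpa [hxy, sub_eq_zero] using hC x hx y hy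
  have hlip : LipschitzOnWith C (Function.invFunOn φ (P i)) (φ '' P i) := by
    refine LipschitzOnWith.of_dist_le_mul ?_
    rintro _ ⟨x, hx, rfl⟩ _ ⟨y, hy, rfl⟩
    rw [hinj.leftInvOn_invFunOn hx, hinj.leftInvOn_invFunOn hy]
    exact hC x hx y hy
  rw [← hinj.invFunOn_image subset_rfl]
  exact hlip.volume_image_eq_zero
    (measure_mono_null (image_mono (hPA ▸ subset_iUnion P i)) hA)

theorem volume_setOf_deriv_ne_zero_mem_eq_zero {φ φ' : ℝ → ℝ} {U E : Set ℝ}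
    (hE : volume E = 0) (hφ : ∀ t ∈ U, HasDerivAt φ (φ' t) t) :
    volume {t ∈ U | φ' t ≠ 0 ∧ φ t ∈ E} = 0 := by
  refine volume_eq_zero_of_isBigO_of_volume_image
    (measure_mono_null (by rintro _ ⟨t, ht, rfl⟩; exact ht.2.2) hE) fun t ht => ?_
  have hθ := HasDerivAtFilter.isTheta_sub (hφ t ht.1) ht.2.1
  exact (hθ.isBigO_symm.comp_tendsto (tendsto_id.prodMk tendsto_const_pure)).mono
    nhdsWithin_le_nhds

theorem LipschitzWith.ae_hasDerivAt_comp {K : ℝ≥0} {F g φ φ' : ℝ → ℝ} {U : Set ℝ}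
    (hF : LipschitzWith K F) (hFd : ∀ᵐ x, HasDerivAt F (g x) x)
    (hφ : ∀ t ∈ U, HasDerivAt φ (φ' t) t) :
    ∀ᵐ t, t ∈ U → HasDerivAt (F ∘ φ) (g (φ t) * φ' t) t := by
  rw [ae_iff]
  refine measure_mono_null (fun t ht => ?_)
    (volume_setOf_deriv_ne_zero_mem_eq_zero (ae_iff.1 hFd) (U := U) hφ)
  obtain ⟨htU, hnot⟩ := Classical.not_imp.1 ht
  refine ⟨htU, fun h0 => hnot ?_, fun hFt => hnot (hFt.comp t (hφ t htU))⟩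
  rw [h0, mul_zero]
  exact hF.hasDerivAt_comp_of_hasDerivAt_zero (h0 ▸ hφ t htU)

/-- The image of `[a, b]` is an interval containing `H a` and `H b`; it is null because `H`
is flat off a null set and pointwise Lipschitz on that null set. -/
theorem eq_of_isBigO_of_ae_hasDerivAt_zero {H : ℝ → ℝ} {a b : ℝ} (hab : a ≤ b)
    (hc : ContinuousOn H (Icc a b))
    (hO : ∀ t ∈ Ioo a b, (fun s => H s - H t) =O[𝓝 t] (fun s => s - t))
    (hd : ∀ᵐ t, t ∈ Ioo a b → HasDerivAt H 0 t) : H a = H b := by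
  set S := {t ∈ Ioo a b | HasDerivAt H 0 t}
  set N := {t ∈ Ioo a b | ¬HasDerivAt H 0 t}
  have hN : volume N = 0 :=
    measure_mono_null (fun _ ht => Classical.not_imp.2 ht) (ae_iff.1 hd)
  have hHN : volume (H '' N) = 0 :=
    volume_image_eq_zero_of_isBigO hN fun t ht => (hO t ht.1).mono nhdsWithin_le_nhds
  have hHS : volume (H '' S) = 0 := by
    refine addHaar_image_eq_zero_of_det_fderivWithin_eq_zero volume
      (f' := fun _ => ContinuousLinearMap.toSpanSingleton ℝ 0)
      (fun t ht => ht.2.hasFDerivAt.hasFDerivWithinAt) fun _ _ => ?_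
    simp
  have hcover : Icc a b ⊆ S ∪ N ∪ {a, b} := by
    intro t ht
    rcases eq_endpoints_or_mem_Ioo_of_mem_Icc ht with rfl | rfl | ht'
    · simp
    · simp
    · by_cases hd : HasDerivAt H 0 t
      · exact Or.inl (Or.inl ⟨ht', hd⟩)
      · exact Or.inl (Or.inr ⟨ht', hd⟩)
  have himage : volume (H '' Icc a b) = 0 := by
    refine measure_mono_null (image_mono hcover) ?_
    rw [image_union, image_union]
    exact measure_union_null (measure_union_null hHS hHN) ((toFinite _).measure_zero _)
  have hsub : uIcc (H a) (H b) ⊆ H '' Icc a b :=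
    (isPreconnected_Icc.image H hc).ordConnected.uIcc_subset
      ⟨a, left_mem_Icc.2 hab, rfl⟩ ⟨b, right_mem_Icc.2 hab, rfl⟩
  have hvol := measure_mono_null hsub himage
  rw [Real.volume_interval, ENNReal.ofReal_eq_zero, abs_nonpos_iff, sub_eq_zero] at hvol
  exact hvol.symm

theorem stmt6_general (I : Set ℝ) (hI : I.OrdConnected) (f : ℝ → ℝ)
    (hbd : ∃ M, ∀ x ∈ I, |f x| ≤ M)
    (hcont : ∀ᵐ x ∂(volume.restrict I), ContinuousWithinAt f I x)
    (α β : ℝ) (hαβ : α ≤ β) (φ φ' : ℝ → ℝ)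
    (hmap : ∀ t ∈ Set.Icc α β, φ t ∈ I)
    (hφc : ContinuousOn φ (Set.Icc α β))
    (hφd : ∀ t ∈ Set.Ioo α β, HasDerivAt φ (φ' t) t)
    (hprod : RiemannIntegrableOn (fun t => f (φ t) * φ' t) (Set.Icc α β)) :
    ∫ x in (φ α)..(φ β), f x = ∫ t in α..β, f (φ t) * φ' t := by
  have hf : RiemannIntegrableOn f I := ⟨hbd, hcont⟩
  obtain ⟨_, hF⟩ := hf.exists_lipschitzWith_integral_indicator hI.measurableSet (φ α)
  obtain ⟨_, hψ⟩ := hprod.exists_lipschitzWith_integral_indicator measurableSet_Icc α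
  have hFφd := hF.ae_hasDerivAt_comp (φ := φ)
    (hf.ae_hasDerivAt_integral_indicator hI.measurableSet (φ α)) hφd
  have hψd := hprod.ae_hasDerivAt_integral_indicator measurableSet_Icc α
  set g := (Icc α β).indicator fun t => f (φ t) * φ' t
  set F := fun x => ∫ y in φ α..x, I.indicator f y
  set ψ := fun t => ∫ s in α..t, g s
  set H := F ∘ φ - ψ
  have hHc : ContinuousOn H (Icc α β) :=
    (hF.continuous.comp_continuousOn hφc).sub hψ.continuous.continuousOn
  have hHO (t : ℝ) (ht : t ∈ Ioo α β) : (fun s => H s - H t) =O[𝓝 t] (fun s => s - t) :=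
    (((hF.isBigO_comp_sub φ _ _).trans (hφd t ht).isBigO_sub).sub
      (hψ.isBigO_comp_sub id _ t)).congr_left fun s => by
        simp only [H, Pi.sub_apply, Function.comp_apply, id]; ring
  have hHd : ∀ᵐ t, t ∈ Ioo α β → HasDerivAt H 0 t := by
    filter_upwards [hFφd, hψd] with t hFt hψt ht
    have htI : t ∈ Icc α β := Ioo_subset_Icc_self ht
    have hgt : I.indicator f (φ t) * φ' t = g t := by
      simp [g, indicator_of_mem htI, indicator_of_mem (hmap t htI)]
    have hHt := (hFt ht).sub hψt
    rwa [hgt, sub_self] at hHt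
  have hconst := eq_of_isBigO_of_ae_hasDerivAt_zero hαβ hHc hHO hHd
  have hJ : uIcc (φ α) (φ β) ⊆ I :=
    hI.uIcc_subset (hmap α (left_mem_Icc.2 hαβ)) (hmap β (right_mem_Icc.2 hαβ))
  calc ∫ x in φ α..φ β, f x = F (φ β) :=
        integral_congr fun x hx => (indicator_of_mem (hJ hx) f).symm
    _ = ψ β := by
        simp only [H, Pi.sub_apply, Function.comp_apply, F, ψ, integral_same, sub_zero] at hconst
        linarith
    _ = ∫ t in α..β, f (φ t) * φ' t :=
        integral_congr fun t ht => indicator_of_mem (by rwa [uIcc_of_le hαβ] at ht) _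

theorem stmt6 (I : Set ℝ) (hI : I.OrdConnected) (f : ℝ → ℝ)
    (hbd : ∃ M, ∀ x ∈ I, |f x| ≤ M)
    (hcont : ∀ᵐ x ∂(volume.restrict I), ContinuousWithinAt f I x)
    (α β : ℝ) (hαβ : α ≤ β) (φ φ' : ℝ → ℝ)
    (hmap : ∀ t ∈ Set.Icc α β, φ t ∈ I)
    (hφc : ContinuousOn φ (Set.Icc α β))
    (hφd : ∀ t ∈ Set.Ioo α β, HasDerivAt φ (φ' t) t)
    (hfJ : RiemannIntegrableOn f (Set.uIcc (φ α) (φ β)))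
    (hprod : RiemannIntegrableOn (fun t => f (φ t) * φ' t) (Set.Icc α β)) :
    ∫ x in (φ α)..(φ β), f x = ∫ t in α..β, f (φ t) * φ' t :=
  stmt6_general I hI f hbd hcont α β hαβ φ φ' hmap hφc hφd hprod
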